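/- arXiv:1811.00699 — 2 statements merged into one kernel-verified Lean document; each statement's English description precedes it below -/
import Mathlib

section
/- Let n ≥ 3 be a natural number and let A and B be finite sets of integers. The following are equivalent: (i) there exist nonempty finite sets of integers A_2, …, A_{n−1} such that, setting A_1 := A and A_n := B, one has A_i = A_{i+1} ∪ {min A_i} for every i with 1 ≤ i ≤ n−1; (ii) A is nonempty, B ⊆ A, the cardinality of A \ B is at most n−1, and if both A \ B and B are nonempty then max(A \ B) < min B. -/
/-- Minimum of a finite set of integers (default 0 on the empty set). -/
def zmin (A : Finset ℤ) : ℤ := if h : A.Nonempty then A.min' h else 0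

/-- Maximum of a finite set of integers (default 0 on the empty set). -/
def zmax (A : Finset ℤ) : ℤ := if h : A.Nonempty then A.max' h else 0

theorem stmt_2 (n : ℕ) (hn : 3 ≤ n) (A B : Finset ℤ) :
    (∃ F : ℕ → Finset ℤ, F 1 = A ∧ F n = B ∧
      (∀ i, 1 ≤ i → i ≤ n - 1 → (F i).Nonempty) ∧
      (∀ i, 1 ≤ i → i ≤ n - 1 → F i = F (i + 1) ∪ {zmin (F i)})) ↔
    (A.Nonempty ∧ B ⊆ A ∧ (A \ B).card ≤ n - 1 ∧
      ((A \ B).Nonempty → B.Nonempty → zmax (A \ B) < zmin B)) := by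
  constructor
  · rintro ⟨F, h1, hnB, hne, hstep⟩
    subst h1; subst hnB
    have hsub : ∀ i, 1 ≤ i → i ≤ n - 1 → F (i + 1) ⊆ F i := by
      intro i hi hi'
      rw [hstep i hi hi']
      exact Finset.subset_union_left
    have hchain : ∀ i j, 1 ≤ i → i ≤ j → j ≤ n → F j ⊆ F i := by
      intro i j hi hij hjn
      induction j with
      | zero => omega
      | succ j ih =>
        rcases Nat.eq_or_lt_of_le hij with h | h
        · subst h; exact Finset.Subset.refl _
        · exact (hsub j (by omega) (by omega)).trans (ih (by omega) (by omega))
    -- key: every removed element is a min at some step and below everything in F n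
    have key : ∀ x ∈ F 1 \ F n,
        (∃ i, 1 ≤ i ∧ i ≤ n - 1 ∧ x = zmin (F i)) ∧ ∀ b ∈ F n, x < b := by
      intro x hx
      rw [Finset.mem_sdiff] at hx
      obtain ⟨hx1, hxn⟩ := hx
      have hex : ∃ i, 1 ≤ i ∧ i ≤ n - 1 ∧ x ∈ F i ∧ x ∉ F (i + 1) := by
        by_contra hcon
        push_neg at hcon
        have hall : ∀ j, 1 ≤ j → j ≤ n → x ∈ F j := by
          intro j hj
          induction j, hj using Nat.le_induction with
          | base => intro _; exact hx1
          | succ j hj ih =>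
            intro hjn
            have hxj : x ∈ F j := ih (by omega)
            exact hcon j hj (by omega) hxj
        exact hxn (hall n (by omega) le_rfl)
      obtain ⟨i, hi1, hi2, hxi, hxi1⟩ := hex
      have hmem := hstep i hi1 hi2 ▸ hxi
      rw [Finset.mem_union, Finset.mem_singleton] at hmem
      have hxeq : x = zmin (F i) := hmem.resolve_left hxi1
      have hnei : (F i).Nonempty := hne i hi1 hi2
      have hmin : zmin (F i) = (F i).min' hnei := dif_pos hnei
      refine ⟨⟨i, hi1, hi2, hxeq⟩, ?_⟩
      intro b hb
      have hbFi : b ∈ F i := hchain i n hi1 (by omega) le_rfl hb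
      have hle : x ≤ b := by
        rw [hxeq, hmin]; exact Finset.min'_le _ _ hbFi
      have hxb : x ≠ b := fun h => hxn (h ▸ hb)
      exact lt_of_le_of_ne hle hxb
    have hAne : (F 1).Nonempty := hne 1 le_rfl (by omega)
    have hBA : F n ⊆ F 1 := hchain 1 n le_rfl (by omega) le_rfl
    refine ⟨hAne, hBA, ?_, ?_⟩
    · have himg : F 1 \ F n ⊆ (Finset.Icc 1 (n - 1)).image (fun i => zmin (F i)) := by
        intro x hx
        obtain ⟨⟨i, hi1, hi2, hxeq⟩, _⟩ := key x hx
        exact Finset.mem_image.mpr ⟨i, Finset.mem_Icc.mpr ⟨hi1, hi2⟩, hxeq.symm⟩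
      calc (F 1 \ F n).card ≤ ((Finset.Icc 1 (n - 1)).image (fun i => zmin (F i))).card :=
            Finset.card_le_card himg
        _ ≤ (Finset.Icc 1 (n - 1)).card := Finset.card_image_le
        _ = n - 1 := by rw [Nat.card_Icc]; omega
    · intro hD hB
      have hmaxD : zmax (F 1 \ F n) = (F 1 \ F n).max' hD := dif_pos hD
      have hminB : zmin (F n) = (F n).min' hB := dif_pos hB
      rw [hmaxD, hminB]
      exact (key _ ((F 1 \ F n).max'_mem hD)).2 _ ((F n).min'_mem hB)
  · rintro ⟨hA, hBA, hcard, hmaxmin⟩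
    set D := A \ B with hD
    set k := D.card with hk
    have hkn : k ≤ n - 1 := hcard
    -- rank function
    set r : ℤ → ℕ := fun x => (D.filter (fun y => y < x)).card with hr
    have hrlt : ∀ x ∈ D, r x < k := by
      intro x hx
      apply Finset.card_lt_card
      exact Finset.filter_ssubset.mpr ⟨x, hx, by simp⟩
    have hrmono : ∀ x ∈ D, ∀ y ∈ D, x < y → r x < r y := by
      intro x hx y hy hxy
      apply Finset.card_lt_card
      rw [Finset.ssubset_iff_of_subset
        (Finset.monotone_filter_right D (fun z _ hz => lt_trans hz hxy))]
      exact ⟨x, Finset.mem_filter.mpr ⟨hx, hxy⟩, by simp⟩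
    set F : ℕ → Finset ℤ := fun i => B ∪ D.filter (fun x => i ≤ n - k + r x) with hF
    have hF1 : F 1 = A := by
      have : D.filter (fun x => 1 ≤ n - k + r x) = D := by
        apply Finset.filter_true_of_mem
        intro x _
        omega
      rw [hF]; simp only [this]
      rw [Finset.union_comm]
      exact Finset.sdiff_union_of_subset hBA
    have hFn : F n = B := by
      have : D.filter (fun x => n ≤ n - k + r x) = ∅ := by
        apply Finset.filter_false_of_mem
        intro x hx
        have := hrlt x hx
        omega
      rw [hF]; simp only [this, Finset.union_empty]
    -- nonemptiness
    have hFne : ∀ i, 1 ≤ i → i ≤ n - 1 → (F i).Nonempty := by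
      intro i hi1 hi2
      rcases B.eq_empty_or_nonempty with hBe | hBne
      · have hDA : D = A := by rw [hD, hBe, Finset.sdiff_empty]
        have hDne : D.Nonempty := hDA ▸ hA
        have hk1 : 1 ≤ k := Finset.card_pos.mpr hDne
        set x := D.max' hDne with hx
        have hxD : x ∈ D := D.max'_mem hDne
        have hrx : r x = k - 1 := by
          have : D.filter (fun y => y < x) = D.erase x := by
            ext y
            simp only [Finset.mem_filter, Finset.mem_erase]
            constructor
            · rintro ⟨hy, hlt⟩; exact ⟨ne_of_lt hlt, hy⟩
            · rintro ⟨hne', hy⟩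
              exact ⟨hy, lt_of_le_of_ne (D.le_max' y hy) hne'⟩
          rw [hr]; simp only [this, Finset.card_erase_of_mem hxD, hk]
        refine ⟨x, ?_⟩
        rw [hF]
        apply Finset.mem_union_right
        apply Finset.mem_filter.mpr ⟨hxD, ?_⟩
        omega
      · obtain ⟨b, hb⟩ := hBne
        exact ⟨b, Finset.mem_union_left _ hb⟩
    refine ⟨F, hF1, hFn, hFne, ?_⟩
    intro i hi1 hi2
    have hnei : (F i).Nonempty := hFne i hi1 hi2
    have hmin : zmin (F i) = (F i).min' hnei := dif_pos hnei
    have hsub1 : F (i + 1) ⊆ F i := by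
      rw [hF]
      apply Finset.union_subset_union_right
      exact Finset.monotone_filter_right D (fun z hz => by omega)
    apply Finset.Subset.antisymm
    · intro x hx
      by_cases hx1 : x ∈ F (i + 1)
      · exact Finset.mem_union_left _ hx1
      · apply Finset.mem_union_right
        rw [Finset.mem_singleton]
        -- x ∈ D with n - k + r x = i
        have hxB : x ∉ B := fun h => hx1 (Finset.mem_union_left _ h)
        have hxD : x ∈ D ∧ i ≤ n - k + r x := by
          have := hx
          rw [hF, Finset.mem_union] at this
          rcases this with h | h
          · exact absurd h hxB
          · exact Finset.mem_filter.mp h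
        have hxeq : n - k + r x = i := by
          rcases hxD with ⟨hxD', hle⟩
          by_contra hne'
          apply hx1
          rw [hF]
          exact Finset.mem_union_right _ (Finset.mem_filter.mpr ⟨hxD', by omega⟩)
        -- x is ≤ everything in F i
        have hxle : ∀ y ∈ F i, x ≤ y := by
          intro y hy
          rw [hF, Finset.mem_union] at hy
          rcases hy with hyB | hyD
          · -- x ≤ max D < min B ≤ y
            have hDne : D.Nonempty := ⟨x, hxD.1⟩
            have hBne : B.Nonempty := ⟨y, hyB⟩
            have h1 := hmaxmin hDne hBne
            have hmaxD : zmax D = D.max' hDne := dif_pos hDne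
            have hminB : zmin B = B.min' hBne := dif_pos hBne
            have : x ≤ D.max' hDne := D.le_max' x hxD.1
            have : x < B.min' hBne := lt_of_le_of_lt this (by rwa [hmaxD, hminB] at h1)
            exact le_of_lt (lt_of_lt_of_le this (B.min'_le y hyB))
          · obtain ⟨hyD', hyle⟩ := Finset.mem_filter.mp hyD
            have hry : r x ≤ r y := by omega
            by_contra hxy
            push_neg at hxy
            exact absurd (hrmono y hyD' x hxD.1 hxy) (by omega)
        rw [hmin]
        exact le_antisymm (hxle _ ((F i).min'_mem hnei)) (Finset.min'_le _ _ hx)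
    · apply Finset.union_subset hsub1
      intro y hy
      rw [Finset.mem_singleton] at hy
      rw [hy, hmin]
      exact (F i).min'_mem hnei
end

section
/- Let c, c' be integers, let n ≥ 1, and let A and B be finite sets of integers. The following are equivalent: (i) there exist nonempty finite sets of integers A_1, …, A_n with A_1 = A such that, setting A_{n+1} := B, for every i with 1 ≤ i ≤ n one has A_i = A_{i+1} ∪ {min A_i} and c ≤ max A_i − min A_i ≤ c'; (ii) there exists a nonempty finite set of integers A'' such that A'' = B ∪ {min A''}, A is nonempty, c ≤ max A − min A ≤ c', c ≤ max A'' − min A'' ≤ c', A'' ⊆ A, the cardinality of A \ A'' is at most n−1, and if A \ A'' is nonempty then max(A \ A'') < min A''. -/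
lemma zmin_le {A : Finset ℤ} (h : A.Nonempty) {x : ℤ} (hx : x ∈ A) : zmin A ≤ x := by
  rw [zmin, dif_pos h]; exact Finset.min'_le _ _ hx

lemma le_zmax {A : Finset ℤ} (h : A.Nonempty) {x : ℤ} (hx : x ∈ A) : x ≤ zmax A := by
  rw [zmax, dif_pos h]; exact Finset.le_max' _ _ hx

lemma zmin_mem {A : Finset ℤ} (h : A.Nonempty) : zmin A ∈ A := by
  rw [zmin, dif_pos h]; exact A.min'_mem h

lemma zmax_mem {A : Finset ℤ} (h : A.Nonempty) : zmax A ∈ A := by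
  rw [zmax, dif_pos h]; exact A.max'_mem h

theorem stmt_3 (c c' : ℤ) (n : ℕ) (hn : 1 ≤ n) (A B : Finset ℤ) :
    (∃ F : ℕ → Finset ℤ, F 1 = A ∧ F (n + 1) = B ∧
      (∀ i, 1 ≤ i → i ≤ n → (F i).Nonempty ∧
        F i = F (i + 1) ∪ {zmin (F i)} ∧
        c ≤ zmax (F i) - zmin (F i) ∧ zmax (F i) - zmin (F i) ≤ c')) ↔
    (∃ A'' : Finset ℤ, A''.Nonempty ∧ A'' = B ∪ {zmin A''} ∧ A.Nonempty ∧
      c ≤ zmax A - zmin A ∧ zmax A - zmin A ≤ c' ∧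
      c ≤ zmax A'' - zmin A'' ∧ zmax A'' - zmin A'' ≤ c' ∧
      A'' ⊆ A ∧ (A \ A'').card ≤ n - 1 ∧
      ((A \ A'').Nonempty → zmax (A \ A'') < zmin A'')) := by
  constructor
  · rintro ⟨F, hF1, hFn1, hstep⟩
    -- key invariant
    have key : ∀ j, 1 ≤ j → j ≤ n →
        F j ⊆ F 1 ∧ (F 1 \ F j).card + 1 ≤ j ∧
        ∀ x ∈ F 1 \ F j, ∀ y ∈ F j, x < y := by
      intro j hj
      induction j, hj using Nat.le_induction with
      | base => intro _; exact ⟨subset_rfl, by simp, by simp⟩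
      | succ j hj ih =>
        intro hjn
        have hjle : j ≤ n := Nat.le_of_succ_le hjn
        obtain ⟨hsub, hcard, horder⟩ := ih hjle
        obtain ⟨hne, heq, _, _⟩ := hstep j hj hjle
        set m := zmin (F j) with hm
        have hsub' : F (j + 1) ⊆ F j := by
          intro x hx; rw [heq]; exact Finset.mem_union_left _ hx
        have hdiff : F j \ F (j + 1) ⊆ {m} := by
          intro x hx
          rw [Finset.mem_sdiff] at hx
          have := hx.1
          rw [heq] at this
          rcases Finset.mem_union.mp this with h | h
          · exact absurd h hx.2
          · exact h
        refine ⟨hsub'.trans hsub, ?_, ?_⟩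
        · have h1 : F 1 \ F (j + 1) ⊆ (F 1 \ F j) ∪ {m} := by
            intro x hx
            rw [Finset.mem_sdiff] at hx
            by_cases hxj : x ∈ F j
            · exact Finset.mem_union_right _ (hdiff (Finset.mem_sdiff.mpr ⟨hxj, hx.2⟩))
            · exact Finset.mem_union_left _ (Finset.mem_sdiff.mpr ⟨hx.1, hxj⟩)
          calc (F 1 \ F (j + 1)).card + 1 ≤ ((F 1 \ F j) ∪ {m}).card + 1 :=
                by exact Nat.add_le_add_right (Finset.card_le_card h1) 1
            _ ≤ ((F 1 \ F j).card + 1) + 1 := by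
                exact Nat.add_le_add_right ((Finset.card_union_le _ _).trans (by simp)) 1
            _ ≤ j + 1 := Nat.add_le_add_right hcard 1
        · intro x hx y hy
          rw [Finset.mem_sdiff] at hx
          by_cases hxj : x ∈ F j
          · have hxm : x = m := Finset.mem_singleton.mp (hdiff (Finset.mem_sdiff.mpr ⟨hxj, hx.2⟩))
            have h1 : m ≤ y := zmin_le hne (hsub' hy)
            have h2 : x ≠ y := by rintro rfl; exact hx.2 hy
            omega
          · exact horder x (Finset.mem_sdiff.mpr ⟨hx.1, hxj⟩) y (hsub' hy)
    obtain ⟨hsubn, hcardn, hordn⟩ := key n hn le_rfl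
    obtain ⟨hAne', heq1, hb1, hb2⟩ := hstep 1 le_rfl hn
    obtain ⟨hA''ne, heqn, hb3, hb4⟩ := hstep n hn le_rfl
    rw [hF1] at hAne' hb1 hb2 hsubn hcardn hordn
    rw [hFn1] at heqn
    refine ⟨F n, hA''ne, heqn, hAne', hb1, hb2, hb3, hb4, hsubn, by omega, ?_⟩
    intro hne
    exact hordn _ (zmax_mem hne) _ (zmin_mem hA''ne)
  · rintro ⟨A'', hA''ne, hA''eq, hAne, hc1, hc2, hc3, hc4, hsub, hcard, hord⟩
    set D := A \ A'' with hD
    set r : ℤ → ℕ := fun x => (D.filter (· < x)).card with hr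
    have hDlt : ∀ x ∈ D, ∀ y ∈ A'', x < y := by
      intro x hx y hy
      have h1 : x ≤ zmax D := le_zmax ⟨x, hx⟩ hx
      have h2 : zmin A'' ≤ y := zmin_le hA''ne hy
      have h3 := hord ⟨x, hx⟩
      omega
    have hDsub : D ⊆ A := Finset.sdiff_subset
    have hunion : A'' ∪ D = A := by
      rw [hD, Finset.union_sdiff_of_subset hsub]
    have hmaxA'' : zmax A'' = zmax A := by
      have h1 : zmax A'' ≤ zmax A := le_zmax hAne (hsub (zmax_mem hA''ne))
      have h2 : zmax A ∈ A := zmax_mem hAne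
      by_cases hx : zmax A ∈ A''
      · exact le_antisymm h1 (le_zmax hA''ne hx)
      · have hxD : zmax A ∈ D := Finset.mem_sdiff.mpr ⟨h2, hx⟩
        have := hDlt _ hxD _ (zmax_mem hA''ne)
        omega
    have hrlt : ∀ x ∈ D, r x + 1 ≤ D.card := by
      intro x hx
      have h1 : D.filter (· < x) ⊆ D.erase x := by
        intro y hy
        rw [Finset.mem_filter] at hy
        exact Finset.mem_erase.mpr ⟨by omega, hy.1⟩
      have h2 := Finset.card_le_card h1
      rw [Finset.card_erase_of_mem hx] at h2
      have h3 : 1 ≤ D.card := Finset.card_pos.mpr ⟨x, hx⟩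
      simp only [hr]
      omega
    refine ⟨fun i => if i = n + 1 then B else A'' ∪ D.filter (fun x => i ≤ r x + 1),
      ?_, by simp, ?_⟩
    · have h1 : (1 : ℕ) ≠ n + 1 := by omega
      simp only [h1, if_false]
      have : D.filter (fun x => 1 ≤ r x + 1) = D := by
        apply Finset.filter_true_of_mem; intro x _; omega
      rw [this, hunion]
    · intro i hi1 hin
      have hi : i ≠ n + 1 := by omega
      simp only [hi, if_false]
      set Di := D.filter (fun x => i ≤ r x + 1) with hDi
      have hFiA : A'' ∪ Di ⊆ A := by
        apply Finset.union_subset hsub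
        exact (Finset.filter_subset _ _).trans hDsub
      have hFine : (A'' ∪ Di).Nonempty :=
        hA''ne.mono Finset.subset_union_left
      have hmaxFi : zmax (A'' ∪ Di) = zmax A := by
        apply le_antisymm
        · exact le_zmax hAne (hFiA (zmax_mem hFine))
        · rw [← hmaxA'']
          exact le_zmax hFine (Finset.mem_union_left _ (zmax_mem hA''ne))
      have hminFi1 : zmin A ≤ zmin (A'' ∪ Di) :=
        zmin_le hAne (hFiA (zmin_mem hFine))
      have hminFi2 : zmin (A'' ∪ Di) ≤ zmin A'' :=
        zmin_le hFine (Finset.mem_union_left _ (zmin_mem hA''ne))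
      refine ⟨hFine, ?_, by omega, by omega⟩
      -- structure equation
      by_cases hin' : i = n
      · subst hin'
        have hDin : Di = ∅ := by
          rw [hDi]
          apply Finset.filter_false_of_mem
          intro x hx
          have := hrlt x hx
          omega
        simp only [hDin, Finset.union_empty, if_pos rfl]
        exact hA''eq
      · have hisucc : i + 1 ≠ n + 1 := by omega
        simp only [hisucc, if_false]
        set Di1 := D.filter (fun x => i + 1 ≤ r x + 1) with hDi1
        have hDisub : Di1 ⊆ Di := by
          intro x hx
          rw [hDi1, Finset.mem_filter] at hx
          rw [hDi, Finset.mem_filter]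
          exact ⟨hx.1, by omega⟩
        rcases Finset.eq_empty_or_nonempty Di with hemp | hDine
        · have h2 : Di1 = ∅ := Finset.subset_empty.mp (hemp ▸ hDisub)
          rw [hemp, h2, Finset.union_empty]
          have : zmin A'' ∈ A'' := zmin_mem hA''ne
          exact (Finset.union_eq_left.mpr (Finset.singleton_subset_iff.mpr this)).symm
        · set m := Di.min' hDine with hm
          have hmD : m ∈ Di := Di.min'_mem hDine
          have hmD' : m ∈ D := (Finset.mem_filter.mp hmD).1
          have hminm : zmin (A'' ∪ Di) = m := by
            apply le_antisymm
            · exact zmin_le hFine (Finset.mem_union_right _ hmD)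
            · have h1 : zmin (A'' ∪ Di) ∈ A'' ∪ Di := zmin_mem hFine
              rcases Finset.mem_union.mp h1 with h | h
              · exact le_of_lt (hDlt _ hmD' _ h)
              · exact Di.min'_le _ h
          rw [hminm]
          -- Di = Di1 ∪ {m}
          have hDieq : Di = Di1 ∪ {m} := by
            apply Finset.Subset.antisymm
            · intro x hx
              by_cases hxm : x = m
              · subst hxm; exact Finset.mem_union_right _ (Finset.mem_singleton_self _)
              · apply Finset.mem_union_left
                have hxD : x ∈ D := (Finset.mem_filter.mp hx).1
                have hmlt : m < x := lt_of_le_of_ne (Di.min'_le _ hx) (Ne.symm hxm)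
                have hrm : i ≤ r m + 1 := (Finset.mem_filter.mp hmD).2
                have hsub2 : insert m (D.filter (· < m)) ⊆ D.filter (· < x) := by
                  intro y hy
                  rcases Finset.mem_insert.mp hy with rfl | hy
                  · exact Finset.mem_filter.mpr ⟨hmD', hmlt⟩
                  · rw [Finset.mem_filter] at hy ⊢
                    exact ⟨hy.1, by omega⟩
                have hcard2 := Finset.card_le_card hsub2
                rw [Finset.card_insert_of_notMem (by simp)] at hcard2
                rw [hDi1, Finset.mem_filter]
                refine ⟨hxD, ?_⟩
                have : r m + 1 ≤ r x := hcard2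
                omega
            · apply Finset.union_subset hDisub
              simpa using hmD
          conv_lhs => rw [hDieq]
          rw [Finset.union_assoc]
end
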